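/- Let k ≥ 1 be an integer. There exists a constant C = C(k) > 0 such that for every integer N ≥ 1 the following holds. Let (g_{i₁,…,i_k}), indexed by (i₁,…,i_k) ∈ {1,…,N}^k, be i.i.d. standard Gaussian random variables, and define the random k-linear form A on ℝ^N by A(X₁,…,X_k) = N^{−(k−1)/2} Σ_{i₁,…,i_k} g_{i₁,…,i_k} X₁(i₁)⋯X_k(i_k). Then E[ sup { A(X₁,…,X_k) : X₁,…,X_k ∈ ℝ^N, |X₁| = ⋯ = |X_k| = 1 } ] ≤ C · N^{1−k/2}. -/

import Mathlib

open MeasureTheory ProbabilityTheory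

/-!
Round each of the `k` unit vectors to a `δ`-net `T` of the unit sphere of `ℝ^N`, with
`δ = 1 / (2 (k + 1))`. By multilinearity this changes the form by at most `k δ ‖A‖ ≤ ‖A‖ / 2`,
so the injective norm `‖A‖` is at most twice the maximum of `|A|` over the `#T ^ k` tuples
of net points, and a volume comparison gives `#T ≤ (1 + 2 / δ) ^ N = (4 k + 5) ^ N`. At a fixed
tuple of unit vectors the unnormalised form is a combination of the independent Gaussian entries
with coefficients of unit `ℓ²` norm, hence standard Gaussian. The expected maximum of `M`
sub-Gaussian variables is at most `log (2 M) / t + t / 2` for every `t > 0`; taking `t = √N`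
and `log M = O(k N log k)` bounds the expected norm of the unnormalised tensor by `C(k) √N`,
and the normalisation `N ^ (-(k - 1) / 2)` turns this into `C(k) N ^ (1 - k / 2)`.
-/

open Finset Real Metric Module
open scoped NNReal ENNReal

section Subgaussian

variable {Ω : Type*} [MeasurableSpace Ω] {μ : Measure Ω}

lemma hasSubgaussianMGF_of_map_eq_gaussianReal {X : Ω → ℝ} {v : ℝ≥0} (hX : AEMeasurable X μ)
    (h : μ.map X = gaussianReal 0 v) : HasSubgaussianMGF X v μ := by
  rw [← HasSubgaussianMGF.id_map_iff hX, h]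
  exact ⟨integrable_exp_mul_gaussianReal, fun t ↦ by simp [mgf_id_gaussianReal]⟩

lemma HasSubgaussianMGF.sum_mul_of_iIndepFun {ι : Type*} [Fintype ι] {X : ι → Ω → ℝ}
    {c : ℝ≥0} (h_indep : iIndepFun X μ) (hX : ∀ i, HasSubgaussianMGF (X i) c μ) {a : ι → ℝ}
    (ha : ∑ i, a i ^ 2 = 1) : HasSubgaussianMGF (fun ω ↦ ∑ i, a i * X i ω) c μ := by
  have h := HasSubgaussianMGF.sum_of_iIndepFun (s := univ)
    (h_indep.comp (fun i x ↦ a i * x) fun i ↦ measurable_const_mul (a i))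
    fun i _ ↦ (hX i).const_mul (a i)
  convert h using 1
  · rfl
  · ext
    rw [NNReal.coe_sum]
    calc (c : ℝ) = ∑ i, a i ^ 2 * c := by rw [← sum_mul, ha, one_mul]
      _ = _ := sum_congr rfl fun i _ ↦ rfl

lemma exp_mul_sup'_abs_le_sum {ι : Type*} {s : Finset ι} (hs : s.Nonempty) (x : ι → ℝ)
    (t : ℝ) : exp (t * s.sup' hs fun i ↦ |x i|) ≤ ∑ i ∈ s, (exp (t * x i) + exp (-t * x i)) := by
  obtain ⟨j, hj, hsup⟩ := exists_mem_eq_sup' hs fun i ↦ |x i|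
  have hj_le : exp (t * |x j|) ≤ exp (t * x j) + exp (-t * x j) := by
    rcases abs_cases (x j) with ⟨h, -⟩ | ⟨h, -⟩ <;> rw [h]
    · exact le_add_of_nonneg_right (exp_pos _).le
    · rw [mul_neg, ← neg_mul]
      exact le_add_of_nonneg_left (exp_pos _).le
  rw [hsup]
  exact hj_le.trans (single_le_sum (f := fun i ↦ exp (t * x i) + exp (-t * x i))
    (fun i _ ↦ by positivity) hj)

lemma integrable_sup'_abs_of_hasSubgaussianMGF {ι : Type*} {s : Finset ι}
    (hs : s.Nonempty) {X : ι → Ω → ℝ} {c : ℝ≥0} (hX : ∀ i ∈ s, HasSubgaussianMGF (X i) c μ) :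
    Integrable (fun ω ↦ s.sup' hs fun i ↦ |X i ω|) μ := by
  have hmeas : AEMeasurable (s.sup' hs fun i ↦ fun ω ↦ |X i ω|) μ :=
    sup'_induction hs (p := fun f ↦ AEMeasurable f μ) _ (fun _ hf _ hg ↦ hf.sup hg)
      fun i hi ↦ (hX i hi).aemeasurable.abs
  refine Integrable.mono' (integrable_finsetSum s fun i hi ↦ (hX i hi).integrable.abs)
    (hmeas.congr (ae_of_all _ fun ω ↦ Finset.sup'_apply hs _ ω)).aestronglyMeasurable
    (ae_of_all _ fun ω ↦ ?_)
  have hsup_nonneg : 0 ≤ s.sup' hs fun i ↦ |X i ω| :=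
    (abs_nonneg _).trans (le_sup' (fun i ↦ |X i ω|) hs.choose_spec)
  rw [norm_eq_abs, abs_of_nonneg hsup_nonneg]
  exact sup'_le hs _ fun i hi ↦ single_le_sum (f := fun i ↦ |X i ω|) (fun i _ ↦ abs_nonneg _) hi

/-- Jensen: `exp (t 𝔼 Z) ≤ 𝔼 exp (t Z) ≤ ∑ᵢ 𝔼 (exp (t Xᵢ) + exp (-t Xᵢ)) ≤ 2 #s exp (c t² / 2)`
for `Z = maxᵢ |Xᵢ|`. -/
lemma integral_sup'_abs_le_of_hasSubgaussianMGF [IsProbabilityMeasure μ] {ι : Type*}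
    {s : Finset ι} (hs : s.Nonempty) {X : ι → Ω → ℝ} {c : ℝ≥0}
    (hX : ∀ i ∈ s, HasSubgaussianMGF (X i) c μ) {t : ℝ} (ht : 0 < t) :
    ∫ ω, s.sup' hs (fun i ↦ |X i ω|) ∂μ ≤ log (2 * #s) / t + c * t / 2 := by
  set Z : Ω → ℝ := fun ω ↦ s.sup' hs fun i ↦ |X i ω|
  set G : Ω → ℝ := fun ω ↦ ∑ i ∈ s, (exp (t * X i ω) + exp (-t * X i ω))
  have hpair : ∀ i ∈ s, Integrable (fun ω ↦ exp (t * X i ω) + exp (-t * X i ω)) μ :=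
    fun i hi ↦ ((hX i hi).integrable_exp_mul t).add ((hX i hi).integrable_exp_mul (-t))
  have hG_int : Integrable G μ := integrable_finsetSum s hpair
  have hG_le : ∫ ω, G ω ∂μ ≤ 2 * #s * exp (c * t ^ 2 / 2) := by
    rw [integral_finsetSum s hpair]
    calc ∑ i ∈ s, ∫ ω, (exp (t * X i ω) + exp (-t * X i ω)) ∂μ
        ≤ ∑ _i ∈ s, 2 * exp (c * t ^ 2 / 2) := sum_le_sum fun i hi ↦ by
          rw [integral_add ((hX i hi).integrable_exp_mul t) ((hX i hi).integrable_exp_mul (-t))]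
          have h₁ := (hX i hi).mgf_le t
          have h₂ := (hX i hi).mgf_le (-t)
          rw [neg_sq] at h₂
          simp only [mgf] at h₁ h₂
          linarith
      _ = 2 * #s * exp (c * t ^ 2 / 2) := by rw [sum_const, nsmul_eq_mul]; ring
  have hZ_int : Integrable Z μ := integrable_sup'_abs_of_hasSubgaussianMGF hs hX
  have hexpZ_int : Integrable (fun ω ↦ exp (t * Z ω)) μ :=
    hG_int.mono' (continuous_exp.comp_aestronglyMeasurable
      (hZ_int.aestronglyMeasurable.const_mul t)) (ae_of_all _ fun ω ↦ by
        rw [norm_of_nonneg (exp_pos _).le]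
        exact exp_mul_sup'_abs_le_sum hs _ t)
  have hjensen : exp (t * ∫ ω, Z ω ∂μ) ≤ 2 * #s * exp (c * t ^ 2 / 2) :=
    calc exp (t * ∫ ω, Z ω ∂μ) = exp (∫ ω, t * Z ω ∂μ) := by rw [integral_const_mul]
      _ ≤ ∫ ω, exp (t * Z ω) ∂μ :=
        convexOn_exp.map_integral_le continuous_exp.continuousOn isClosed_univ
          (ae_of_all _ fun _ ↦ Set.mem_univ _) (hZ_int.const_mul t) hexpZ_int
      _ ≤ ∫ ω, G ω ∂μ := integral_mono hexpZ_int hG_int fun ω ↦ exp_mul_sup'_abs_le_sum hs _ t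
      _ ≤ 2 * #s * exp (c * t ^ 2 / 2) := hG_le
  have hs_pos : (0 : ℝ) < 2 * #s := by have := hs.card_pos; positivity
  have hlog := log_le_log (exp_pos _) hjensen
  rw [log_exp, log_mul hs_pos.ne' (exp_pos _).ne', log_exp] at hlog
  rw [div_add' _ _ _ ht.ne', le_div_iff₀ ht]
  nlinarith

end Subgaussian

section SphereNet

variable {E : Type*} [NormedAddCommGroup E] [NormedSpace ℝ E] [FiniteDimensional ℝ E]

/-- The balls of radius `ε / 2` around the points of `F` are disjoint and lie in the ball of
radius `1 + ε / 2`. -/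
lemma IsSeparated.card_le_of_subset_sphere [MeasurableSpace E] [BorelSpace E] {F : Finset E}
    {ε : ℝ≥0} (hε : 0 < ε) (hF : (F : Set E) ⊆ sphere 0 1)
    (hsep : IsSeparated (ε : ℝ≥0∞) (F : Set E)) : (#F : ℝ) ≤ (1 + 2 / ε) ^ finrank ℝ E := by
  set μ : Measure E := Measure.addHaar
  set r : ℝ := ε / 2 with hr_def
  have hr : 0 < r := by positivity
  have hdisj : (F : Set E).PairwiseDisjoint fun y ↦ ball y r := by
    intro x hx y hy hxy
    refine ball_disjoint_ball ?_
    have h : (ε : ℝ≥0∞) < edist x y := hsep hx hy hxy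
    rw [edist_nndist, ENNReal.coe_lt_coe, ← NNReal.coe_lt_coe, coe_nndist] at h
    rw [hr_def]
    linarith
  have hsub : (⋃ y ∈ F, ball y r) ⊆ ball 0 (1 + r) := by
    refine Set.iUnion₂_subset fun y hy z hz ↦ ?_
    rw [mem_ball] at hz
    rw [mem_ball, dist_zero_right]
    have hy1 : ‖y‖ = 1 := by simpa using hF hy
    calc ‖z‖ ≤ dist z y + ‖y‖ := by simpa using dist_triangle z y 0
      _ < 1 + r := by rw [hy1]; linarith
  have hvol : #F * μ (ball 0 r) ≤ μ (ball 0 (1 + r)) :=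
    calc #F * μ (ball 0 r) = μ (⋃ y ∈ F, ball y r) := by
          rw [measure_biUnion_finset hdisj fun y _ ↦ measurableSet_ball]
          simp [Measure.addHaar_ball_center]
      _ ≤ μ (ball 0 (1 + r)) := measure_mono hsub
  rw [Measure.addHaar_ball_of_pos μ _ (show 0 < 1 + r by positivity),
    Measure.addHaar_ball_of_pos μ _ hr, ← mul_assoc,
    ENNReal.mul_le_mul_iff_left (measure_ball_pos μ _ one_pos).ne' measure_ball_lt_top.ne,
    ← ENNReal.ofReal_natCast, ← ENNReal.ofReal_mul (by positivity),
    ENNReal.ofReal_le_ofReal_iff (by positivity), ← le_div_iff₀ (by positivity),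
    ← div_pow] at hvol
  rwa [show (1 + r) / r = 1 + 2 / ε by rw [hr_def]; field_simp; ring] at hvol

lemma exists_finset_isCover_sphere {ε : ℝ≥0} (hε : 0 < ε) :
    ∃ T : Finset E, (T : Set E) ⊆ sphere 0 1 ∧ IsCover ε (sphere (0 : E) 1) T ∧
      (#T : ℝ) ≤ (1 + 2 / ε) ^ finrank ℝ E := by
  borelize E
  set S := sphere (0 : E) 1
  have hpacking : packingNumber ε S ≠ ⊤ := by
    set m := ⌊(1 + 2 / (ε : ℝ)) ^ finrank ℝ E⌋₊
    refine ne_top_of_le_ne_top (ENat.natCast_ne_top m) ?_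
    refine iSup₂_le fun C hCS ↦ iSup_le fun hC ↦ ?_
    by_contra! hlt
    obtain ⟨D, hDC, hD⟩ := Set.exists_subset_encard_eq (Order.add_one_le_of_lt hlt)
    have hDfin : D.Finite := Set.finite_of_encard_eq_coe hD
    have hDcard : #hDfin.toFinset = m + 1 := by
      rw [← ENat.natCast_inj, ← Set.encard_coe_eq_coe_finsetCard, hDfin.coe_toFinset, hD]
      rfl
    have hcard := IsSeparated.card_le_of_subset_sphere (F := hDfin.toFinset) hε
      (by simpa using hDC.trans hCS) (by simpa using hC.subset hDC)
    rw [hDcard, Nat.cast_add_one] at hcard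
    exact (Nat.lt_floor_add_one _).not_ge hcard
  have hfin : (maximalSeparatedSet ε S).Finite := by
    rw [← Set.encard_ne_top_iff, encard_maximalSeparatedSet hpacking]
    exact hpacking
  refine ⟨hfin.toFinset, by simpa using maximalSeparatedSet_subset,
    by simpa using isCover_maximalSeparatedSet hpacking, ?_⟩
  exact IsSeparated.card_le_of_subset_sphere hε (by simpa using maximalSeparatedSet_subset)
    (by simpa using isSeparated_maximalSeparatedSet)

end SphereNet

namespace ContinuousMultilinearMap

variable {ι : Type*} [Fintype ι] {E G : Type*} [NormedAddCommGroup E] [NormedSpace ℝ E]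
  [NormedAddCommGroup G] [NormedSpace ℝ G]

lemma opNorm_le_of_unit_norm (f : ContinuousMultilinearMap ℝ (fun _ : ι ↦ E) G) {C : ℝ}
    (hC : 0 ≤ C) (hf : ∀ u : ι → E, (∀ j, ‖u j‖ = 1) → ‖f u‖ ≤ C) : ‖f‖ ≤ C := by
  refine f.opNorm_le_bound hC fun m ↦ ?_
  by_cases h0 : ∃ j, m j = 0
  · obtain ⟨j, hj⟩ := h0
    rw [f.map_coord_zero j hj, norm_zero]
    positivity
  push Not at h0
  set u : ι → E := fun j ↦ ‖m j‖⁻¹ • m j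
  have hm : m = fun j ↦ ‖m j‖ • u j := by
    ext1 j
    rw [smul_smul, mul_inv_cancel₀ (norm_ne_zero_iff.mpr (h0 j)), one_smul]
  calc ‖f m‖ = (∏ j, ‖m j‖) * ‖f u‖ := by
        conv_lhs => rw [hm]
        rw [f.map_smul_univ, norm_smul, norm_of_nonneg (by positivity)]
    _ ≤ (∏ j, ‖m j‖) * C := by
        gcongr
        exact hf u fun j ↦ norm_smul_inv_norm (h0 j)
    _ = C * ∏ j, ‖m j‖ := mul_comm _ _

lemma norm_image_sub_le_of_norm_eq_one [DecidableEq ι]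
    (f : ContinuousMultilinearMap ℝ (fun _ : ι ↦ E) G) {u v : ι → E} (hu : ∀ j, ‖u j‖ = 1)
    (hv : ∀ j, ‖v j‖ = 1) {δ : ℝ} (huv : ∀ j, ‖u j - v j‖ ≤ δ) :
    ‖f u - f v‖ ≤ ‖f‖ * (Fintype.card ι * δ) := by
  refine (f.norm_image_sub_le' u v).trans (mul_le_mul_of_nonneg_left ?_ (norm_nonneg f))
  calc (∑ i, ∏ j, if j = i then ‖u i - v i‖ else max ‖u j‖ ‖v j‖)
      = ∑ i, ‖u i - v i‖ := sum_congr rfl fun i _ ↦ by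
        rw [prod_eq_single i (fun j _ hji ↦ by rw [if_neg hji, hu j, hv j, max_self]) (by simp),
          if_pos rfl]
    _ ≤ ∑ _i : ι, δ := sum_le_sum fun i _ ↦ huv i
    _ = Fintype.card ι * δ := by rw [sum_const, card_univ, nsmul_eq_mul]

lemma norm_le_two_mul_sup'_of_isCover [DecidableEq ι]
    (f : ContinuousMultilinearMap ℝ (fun _ : ι ↦ E) G) {T : Finset E} (hT : T.Nonempty)
    (hT_sphere : (T : Set E) ⊆ sphere 0 1) {δ : ℝ≥0} (hT_cover : IsCover δ (sphere (0 : E) 1) T)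
    (hδ : (Fintype.card ι : ℝ) * δ ≤ 1 / 2) :
    ‖f‖ ≤ 2 * (Fintype.piFinset fun _ ↦ T).sup' (Fintype.piFinset_nonempty.mpr fun _ ↦ hT)
      fun Y ↦ ‖f Y‖ := by
  set M := (Fintype.piFinset fun _ ↦ T).sup' (Fintype.piFinset_nonempty.mpr fun _ ↦ hT)
    fun Y ↦ ‖f Y‖
  have hM : 0 ≤ M := (norm_nonneg _).trans
    (le_sup' (fun Y ↦ ‖f Y‖) (Fintype.piFinset_nonempty.mpr fun _ ↦ hT).choose_spec)
  suffices ‖f‖ ≤ M + ‖f‖ / 2 by linarith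
  refine f.opNorm_le_of_unit_norm (by positivity) fun u hu ↦ ?_
  choose Y hYT hYu using fun j ↦ hT_cover (x := u j) (by simpa using hu j)
  have hYu_dist (j) : ‖u j - Y j‖ ≤ δ := by
    rw [← dist_eq_norm, ← coe_nndist, NNReal.coe_le_coe, ← edist_le_coe]
    exact hYu j
  have hdiff := f.norm_image_sub_le_of_norm_eq_one hu
    (fun j ↦ by simpa using hT_sphere (hYT j)) hYu_dist
  have hfY : ‖f Y‖ ≤ M := le_sup' (fun Y ↦ ‖f Y‖) (Fintype.mem_piFinset.mpr hYT)
  calc ‖f u‖ ≤ ‖f u - f Y‖ + ‖f Y‖ := norm_le_norm_sub_add _ _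
    _ ≤ ‖f‖ * (1 / 2) + M := by gcongr; exact hdiff.trans (by gcongr)
    _ = M + ‖f‖ / 2 := by ring

lemma sSup_mul_apply_le_mul_norm (f : ContinuousMultilinearMap ℝ (fun _ : ι ↦ E) ℝ) {c : ℝ}
    (hc : 0 ≤ c) : sSup {a : ℝ | ∃ X : ι → E, (∀ j, ‖X j‖ = 1) ∧ a = c * f X} ≤ c * ‖f‖ := by
  refine Real.sSup_le ?_ (by positivity)
  rintro _ ⟨X, hX, rfl⟩
  gcongr
  calc f X ≤ ‖f X‖ := le_norm_self _
    _ ≤ ‖f‖ * ∏ j, ‖X j‖ := f.le_opNorm X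
    _ = ‖f‖ := by simp [hX]

end ContinuousMultilinearMap

namespace EuclideanSpace

variable {ι κ : Type*} [Fintype ι] [DecidableEq ι] [Fintype κ]

noncomputable def multilinearForm (a : (ι → κ) → ℝ) :
    ContinuousMultilinearMap ℝ (fun _ : ι ↦ EuclideanSpace ℝ κ) ℝ :=
  ∑ i, a i • (ContinuousMultilinearMap.mkPiAlgebra ℝ ι ℝ).compContinuousLinearMap
    fun j ↦ EuclideanSpace.proj (i j)

@[simp]
lemma multilinearForm_apply (a : (ι → κ) → ℝ) (X : ι → EuclideanSpace ℝ κ) :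
    multilinearForm a X = ∑ i, a i * ∏ j, X j (i j) := by
  simp [multilinearForm]

lemma sum_prod_sq_eq_prod_norm_sq (X : ι → EuclideanSpace ℝ κ) :
    ∑ i : ι → κ, (∏ j, X j (i j)) ^ 2 = ∏ j, ‖X j‖ ^ 2 := by
  simp_rw [EuclideanSpace.norm_sq_eq, Real.norm_eq_abs, sq_abs, ← prod_pow]
  rw [prod_univ_sum, Fintype.piFinset_univ]

variable {Ω : Type*} [MeasurableSpace Ω] {μ : Measure Ω} {g : (ι → κ) → Ω → ℝ}

lemma integrable_multilinearForm (hg : ∀ i, Integrable (g i) μ) :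
    Integrable (fun ω ↦ multilinearForm fun i ↦ g i ω) μ := by
  unfold multilinearForm
  exact integrable_finsetSum (ε' := ContinuousMultilinearMap ℝ (fun _ : ι ↦ EuclideanSpace ℝ κ) ℝ)
    univ fun i _ ↦ (hg i).smul_const _

lemma hasSubgaussianMGF_multilinearForm_apply {c : ℝ≥0} (h_indep : iIndepFun g μ)
    (hg : ∀ i, HasSubgaussianMGF (g i) c μ) {X : ι → EuclideanSpace ℝ κ} (hX : ∀ j, ‖X j‖ = 1) :
    HasSubgaussianMGF (fun ω ↦ multilinearForm (fun i ↦ g i ω) X) c μ := by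
  simp_rw [multilinearForm_apply, mul_comm (g _ _)]
  exact HasSubgaussianMGF.sum_mul_of_iIndepFun h_indep hg
    (by simp [sum_prod_sq_eq_prod_norm_sq, hX])

lemma integral_norm_multilinearForm_le_of_isCover [IsProbabilityMeasure μ] {c : ℝ≥0}
    (h_indep : iIndepFun g μ) (hg : ∀ i, HasSubgaussianMGF (g i) c μ)
    {T : Finset (EuclideanSpace ℝ κ)} (hT : T.Nonempty)
    (hT_sphere : (T : Set (EuclideanSpace ℝ κ)) ⊆ sphere 0 1) {δ : ℝ≥0}
    (hT_cover : IsCover δ (sphere 0 1) (T : Set (EuclideanSpace ℝ κ)))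
    (hδ : (Fintype.card ι : ℝ) * δ ≤ 1 / 2) {t : ℝ} (ht : 0 < t) :
    ∫ ω, ‖multilinearForm fun i ↦ g i ω‖ ∂μ ≤
      2 * (log (2 * #T ^ Fintype.card ι) / t + c * t / 2) := by
  set F := fun ω ↦ multilinearForm fun i ↦ g i ω
  set 𝒯 := Fintype.piFinset fun _ : ι ↦ T
  have h𝒯 : 𝒯.Nonempty := Fintype.piFinset_nonempty.mpr fun _ ↦ hT
  have hsub : ∀ Y ∈ 𝒯, HasSubgaussianMGF (fun ω ↦ F ω Y) c μ := fun Y hY ↦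
    hasSubgaussianMGF_multilinearForm_apply h_indep hg fun j ↦ by
      simpa using hT_sphere (Fintype.mem_piFinset.mp hY j)
  have hnorm (ω) : ‖F ω‖ ≤ 2 * 𝒯.sup' h𝒯 fun Y ↦ |F ω Y| := by
    simpa only [Real.norm_eq_abs] using
      (F ω).norm_le_two_mul_sup'_of_isCover hT hT_sphere hT_cover hδ
  have h𝒯_card : #𝒯 = #T ^ Fintype.card ι := by simp [𝒯]
  calc ∫ ω, ‖F ω‖ ∂μ ≤ ∫ ω, 2 * 𝒯.sup' h𝒯 (fun Y ↦ |F ω Y|) ∂μ :=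
        integral_mono (integrable_multilinearForm fun i ↦ (hg i).integrable).norm
          ((integrable_sup'_abs_of_hasSubgaussianMGF h𝒯 hsub).const_mul 2) hnorm
    _ = 2 * ∫ ω, 𝒯.sup' h𝒯 (fun Y ↦ |F ω Y|) ∂μ := integral_const_mul _ _
    _ ≤ 2 * (log (2 * #T ^ Fintype.card ι) / t + c * t / 2) := by
        gcongr
        exact_mod_cast h𝒯_card ▸ integral_sup'_abs_le_of_hasSubgaussianMGF h𝒯 hsub ht

lemma integral_norm_multilinearForm_le [IsProbabilityMeasure μ] [Nonempty κ] {c : ℝ≥0}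
    (h_indep : iIndepFun g μ) (hg : ∀ i, HasSubgaussianMGF (g i) c μ) :
    ∫ ω, ‖multilinearForm fun i ↦ g i ω‖ ∂μ ≤
      (2 * (log 2 + Fintype.card ι * log (4 * Fintype.card ι + 5)) + c) * √(Fintype.card κ) := by
  set m := Fintype.card ι
  set n := Fintype.card κ
  -- `m + 1` rather than `m`, so that `δ` is a genuine radius also for `m = 0`
  set δ : ℝ≥0 := (2 * (m + 1))⁻¹
  obtain ⟨T, hT_sphere, hT_cover, hT_card⟩ :=
    exists_finset_isCover_sphere (E := EuclideanSpace ℝ κ) (ε := δ) (by positivity)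
  have hT : T.Nonempty := by
    simpa using hT_cover.nonempty (NormedSpace.sphere_nonempty.mpr zero_le_one)
  have hδ : (m : ℝ) * δ ≤ 1 / 2 := by
    rw [NNReal.coe_inv, ← div_eq_mul_inv, div_le_iff₀ (by positivity)]
    push_cast
    linarith
  have hT_card' : (#T : ℝ) ≤ (4 * m + 5) ^ n := by
    convert hT_card using 2
    · simp only [δ, NNReal.coe_inv, NNReal.coe_mul, NNReal.coe_ofNat, NNReal.coe_add,
        NNReal.coe_natCast, NNReal.coe_one, div_inv_eq_mul]
      ring
    · exact finrank_euclideanSpace.symm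
  have hlog : log (2 * #T ^ m) ≤ n * (log 2 + m * log (4 * m + 5)) := by
    have hlogT : log #T ≤ n * log (4 * m + 5) := by
      rw [← log_pow]
      exact log_le_log (by exact_mod_cast hT.card_pos) hT_card'
    have hn : (1 : ℝ) ≤ n := by exact_mod_cast Fintype.card_pos
    have hlog2 : 0 ≤ log 2 := log_nonneg one_le_two
    have hlog_m : 0 ≤ log (4 * m + 5) := log_nonneg (by linarith [m.cast_nonneg (α := ℝ)])
    rw [log_mul two_ne_zero (by simp [hT.ne_empty]), log_pow]
    nlinarith [mul_le_mul_of_nonneg_left hlogT m.cast_nonneg]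
  have hn : 0 < √(n : ℝ) := sqrt_pos.mpr (by exact_mod_cast Fintype.card_pos)
  calc _ ≤ 2 * (log (2 * #T ^ m) / √n + c * √n / 2) :=
        integral_norm_multilinearForm_le_of_isCover h_indep hg hT hT_sphere hT_cover hδ hn
    _ ≤ 2 * (n * (log 2 + m * log (4 * m + 5)) / √n + c * √n / 2) := by gcongr
    _ = (2 * (log 2 + m * log (4 * m + 5)) + c) * √n := by
        field_simp
        rw [sq_sqrt n.cast_nonneg]
        ring

end EuclideanSpace

/-- `f` need not be integrable: then its integral is `0`. -/
lemma MeasureTheory.integral_le_of_le_of_integrable {Ω : Type*} [MeasurableSpace Ω]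
    {μ : Measure Ω} {f g : Ω → ℝ} (hg : Integrable g μ) (hg₀ : 0 ≤ ∫ ω, g ω ∂μ)
    (hfg : ∀ ω, f ω ≤ g ω) : ∫ ω, f ω ∂μ ≤ ∫ ω, g ω ∂μ := by
  by_cases hf : Integrable f μ
  · exact integral_mono hf hg hfg
  · rwa [integral_undef hf]

theorem gaussian_tensor_injective_norm (k : ℕ) :
    ∃ C > (0 : ℝ), ∀ N : ℕ, 1 ≤ N →
      ∀ (Ω : Type) (_ : MeasurableSpace Ω) (μ : Measure Ω), IsProbabilityMeasure μ →
      ∀ g : (Fin k → Fin N) → Ω → ℝ,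
        (∀ i, Measurable (g i)) →
        (∀ i, Measure.map (g i) μ = gaussianReal 0 1) →
        iIndepFun g μ →
        (∫ ω, sSup {a : ℝ | ∃ X : Fin k → EuclideanSpace ℝ (Fin N),
            (∀ j, ‖X j‖ = 1) ∧
            a = (N : ℝ) ^ (-(((k : ℝ) - 1) / 2)) *
              ∑ i : Fin k → Fin N, g i ω * ∏ j, X j (i j)} ∂μ)
          ≤ C * (N : ℝ) ^ ((1 : ℝ) - k / 2) := by
  set K := 2 * (log 2 + k * log (4 * k + 5)) + 1
  have hK : 0 < K := by
    have : 0 ≤ log (4 * k + 5) := log_nonneg (by linarith [k.cast_nonneg (α := ℝ)])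
    positivity
  refine ⟨K, hK, fun N hN Ω _ μ _ g hg_meas hg_law hg_indep ↦ ?_⟩
  have : Nonempty (Fin N) := ⟨⟨0, hN⟩⟩
  have hg (i) : HasSubgaussianMGF (g i) 1 μ :=
    hasSubgaussianMGF_of_map_eq_gaussianReal (hg_meas i).aemeasurable (hg_law i)
  set c := (N : ℝ) ^ (-(((k : ℝ) - 1) / 2))
  set F := fun ω ↦ EuclideanSpace.multilinearForm fun i ↦ g i ω
  have hsup (ω) := (F ω).sSup_mul_apply_le_mul_norm (c := c) (by positivity)
  simp only [F, EuclideanSpace.multilinearForm_apply] at hsup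
  calc _ ≤ ∫ ω, c * ‖F ω‖ ∂μ := integral_le_of_le_of_integrable
        ((EuclideanSpace.integrable_multilinearForm fun i ↦ (hg i).integrable).norm.const_mul c)
        (integral_nonneg fun ω ↦ by positivity) hsup
    _ = c * ∫ ω, ‖F ω‖ ∂μ := integral_const_mul _ _
    _ ≤ c * (K * √N) := by
        gcongr
        simpa using EuclideanSpace.integral_norm_multilinearForm_le hg_indep hg
    _ = K * (N : ℝ) ^ ((1 : ℝ) - k / 2) := by
        rw [sqrt_eq_rpow, mul_left_comm, ← rpow_add (by exact_mod_cast hN)]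
        ring_nf
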